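/- arXiv:2212.12962 — 4 statements merged into one kernel-verified Lean document; each statement's English description precedes it below -/
import Mathlib

section
/- Let f be an affine permutation of period n, and let C ⊆ ℤ be a nonempty, n-periodic, f-closed set (i.e., i ∈ C iff i+n ∈ C, and i ∈ C iff f(i) ∈ C). Then the restriction f|_C, defined as r_C ∘ f ∘ r_C⁻¹ where r_C : C → ℤ is the unique order-preserving bijection sending min(C ∩ [1,n]) to 1, is an affine permutation of period #(C ∩ [1,n]). -/
/-- An affine permutation of period `n`: a bijection `f : ℤ → ℤ` with `f (i + n) = f i + n`. -/
def IsAffinePerm (n : ℕ) (f : ℤ → ℤ) : Prop :=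
  Function.Bijective f ∧ ∀ i : ℤ, f (i + n) = f i + n

/-- A set `C ⊆ ℤ` is nonempty, `n`-periodic and `f`-closed. -/
def IsClosedSet (n : ℕ) (f : ℤ → ℤ) (C : Set ℤ) : Prop :=
  C.Nonempty ∧ (∀ i : ℤ, i ∈ C ↔ i + n ∈ C) ∧ (∀ i : ℤ, i ∈ C ↔ f i ∈ C)

/-- A cycle of `f`: a minimal (by inclusion) nonempty `n`-periodic `f`-closed set. -/
def IsCycleOf (n : ℕ) (f : ℤ → ℤ) (C : Set ℤ) : Prop :=
  IsClosedSet n f C ∧ ∀ C' ⊆ C, IsClosedSet n f C' → C' = C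

/-- `n_f(C) = #(C ∩ {1,…,n})`. -/
noncomputable def nOf (n : ℕ) (C : Set ℤ) : ℕ :=
  (C ∩ Set.Icc (1 : ℤ) (n : ℤ)).ncard

/-!
Since `C` is `n`-periodic, every window `(a, a + n]` contains the same number `m = #(C ∩ [1, n])`
of elements of `C`: sliding the window by one drops `a + 1` and adds `a + n + 1`, which lie in `C`
together. The order-preserving bijection `r` carries `C ∩ (a, a + n]` onto `(r a, r (a + n)]`, so
`r (a + n) = r a + m` for `a ∈ C`, and conjugating `f (i + n) = f i + n` by `r` gives
`g (x + m) = g x + m`.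
-/

open Set Function

open Classical in
theorem Set.ncard_inter_insert {α : Type*} {C s : Set α} {x : α} (hs : s.Finite) (hx : x ∉ s) :
    (C ∩ insert x s).ncard = (C ∩ s).ncard + if x ∈ C then 1 else 0 := by
  split_ifs with h
  · rw [inter_insert_of_mem h, ncard_insert_of_notMem (fun h' => hx h'.2) (hs.inter_of_right C)]
  · rw [inter_insert_of_notMem h, add_zero]

section PeriodicSet

variable {n : ℕ} {C : Set ℤ}

theorem ncard_inter_Ioc_add_one (hC : ∀ i, i ∈ C ↔ i + n ∈ C) (a : ℤ) :
    (C ∩ Ioc (a + 1) (a + 1 + n)).ncard = (C ∩ Ioc a (a + n)).ncard := by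
  classical
  have hn : (0 : ℤ) ≤ n := n.cast_nonneg
  have drop_bottom := ncard_inter_insert (C := C) (finite_Ioc (a + 1) (a + 1 + n))
    (x := a + 1) (by simp)
  have add_top := ncard_inter_insert (C := C) (finite_Ioc a (a + n)) (x := a + n + 1) (by simp)
  rw [insert_Ioc_add_one_left_eq_Ioc (by omega)] at drop_bottom
  rw [insert_Ioc_right_eq_Ioc_add_one (by omega), show a + n + 1 = a + 1 + n by ring] at add_top
  simp only [← hC (a + 1)] at add_top
  omega

theorem ncard_inter_Ioc_add_period (hC : ∀ i, i ∈ C ↔ i + n ∈ C) (a : ℤ) :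
    (C ∩ Ioc a (a + n)).ncard = nOf n C := by
  induction a using Int.induction_on with
  | zero => rw [nOf, zero_add, ← Icc_add_one_left_eq_Ioc, zero_add]
  | succ k ih => rw [ncard_inter_Ioc_add_one hC, ih]
  | pred k ih => rw [← ih, ← ncard_inter_Ioc_add_one hC, sub_add_cancel]

end PeriodicSet

theorem StrictMonoOn.image_inter_Ioc {α β : Type*} [LinearOrder α] [LinearOrder β] {r : α → β}
    {C : Set α} (hr : StrictMonoOn r C) (hsurj : SurjOn r C univ) {a b : α} (ha : a ∈ C)
    (hb : b ∈ C) : r '' (C ∩ Ioc a b) = Ioc (r a) (r b) := by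
  refine Subset.antisymm ?_ fun y hy => ?_
  · rintro _ ⟨x, ⟨hx, hax, hxb⟩, rfl⟩
    exact ⟨hr ha hx hax, hr.monotoneOn hx hb hxb⟩
  · obtain ⟨x, hx, rfl⟩ := hsurj (mem_univ y)
    exact ⟨x, ⟨hx, (hr.lt_iff_lt ha hx).1 hy.1, (hr.le_iff_le hx hb).1 hy.2⟩, rfl⟩

section Restriction

variable {n : ℕ} {f r g : ℤ → ℤ} {C : Set ℤ}

theorem map_add_period_of_strictMonoOn (hC : ∀ i, i ∈ C ↔ i + n ∈ C) (hr : StrictMonoOn r C)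
    (hbij : BijOn r C univ) {a : ℤ} (ha : a ∈ C) : r (a + n) = r a + nOf n C := by
  have ha' : a + n ∈ C := (hC a).1 ha
  have hle : r a ≤ r (a + n) := hr.monotoneOn ha ha' (by omega)
  have hcard : (Ioc (r a) (r (a + n))).ncard = nOf n C := by
    rw [← hr.image_inter_Ioc hbij.surjOn ha ha',
      (hbij.injOn.mono inter_subset_left).ncard_image, ncard_inter_Ioc_add_period hC]
  rw [← Finset.coe_Ioc, ncard_coe_finset, Int.card_Ioc] at hcard
  omega

theorem bijective_of_bijOn_semiconj (hf : Bijective f) (hfC : ∀ i, i ∈ C ↔ f i ∈ C)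
    (hbij : BijOn r C univ) (hg : ∀ i ∈ C, g (r i) = r (f i)) : Bijective g := by
  constructor
  · intro x y hxy
    obtain ⟨i, hi, rfl⟩ := hbij.surjOn (mem_univ x)
    obtain ⟨j, hj, rfl⟩ := hbij.surjOn (mem_univ y)
    rw [hg i hi, hg j hj] at hxy
    rw [hf.injective (hbij.injOn ((hfC i).1 hi) ((hfC j).1 hj) hxy)]
  · intro y
    obtain ⟨j, hj, rfl⟩ := hbij.surjOn (mem_univ y)
    obtain ⟨i, rfl⟩ := hf.surjective j
    exact ⟨r i, hg i ((hfC i).2 hj)⟩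

end Restriction

theorem stmt_5_general (n : ℕ) (f : ℤ → ℤ) (hf : IsAffinePerm n f)
    (C : Set ℤ) (hC : IsClosedSet n f C)
    (r : ℤ → ℤ) (hmono : StrictMonoOn r C) (hbij : Set.BijOn r C Set.univ)
    (g : ℤ → ℤ) (hg : ∀ i ∈ C, g (r i) = r (f i)) :
    IsAffinePerm (nOf n C) g := by
  obtain ⟨hf, hfn⟩ := hf
  obtain ⟨-, hper, hfC⟩ := hC
  refine ⟨bijective_of_bijOn_semiconj hf hfC hbij hg, fun x => ?_⟩
  obtain ⟨i, hi, rfl⟩ := hbij.surjOn (mem_univ x)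
  have hr_shift {a : ℤ} (ha : a ∈ C) := map_add_period_of_strictMonoOn hper hmono hbij ha
  calc g (r i + nOf n C) = r (f (i + n)) := by rw [← hr_shift hi, hg _ ((hper i).1 hi)]
    _ = g (r i) + nOf n C := by rw [hfn, hr_shift ((hfC i).1 hi), hg i hi]

/-- The restriction of an affine permutation `f` to a nonempty `n`-periodic `f`-closed set
`C`, reindexed through the order-preserving bijection `r : C → ℤ` sending the least element
of `C ∩ {1,…,n}` to `1`, is an affine permutation of period `#(C ∩ {1,…,n})`. -/
theorem stmt_5 (n : ℕ) (hn : 1 ≤ n) (f : ℤ → ℤ) (hf : IsAffinePerm n f)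
    (C : Set ℤ) (hC : IsClosedSet n f C)
    (r : ℤ → ℤ) (hmono : StrictMonoOn r C) (hbij : Set.BijOn r C Set.univ)
    (i0 : ℤ) (hi0 : i0 ∈ C ∩ Set.Icc (1 : ℤ) (n : ℤ))
    (hmin : ∀ j ∈ C ∩ Set.Icc (1 : ℤ) (n : ℤ), i0 ≤ j)
    (hri0 : r i0 = 1)
    (g : ℤ → ℤ) (hg : ∀ i ∈ C, g (r i) = r (f i)) :
    IsAffinePerm (nOf n C) g :=
  stmt_5_general n f hf C hC r hmono hbij g hg
end

section
/- Let f be an affine permutation of period n. Then the extended affine Weyl group element associated to f has finite order modulo translations by Λⁿ (where Λ : i ↦ i+1) if and only if all cycles of f have the same slope. Concretely: there exists N ≥ 1 such that f^N(i) − i is divisible by n and the integer (f^N(i) − i)/n is independent of i, if and only if the slope ν_f(C) := k_f(C)/n_f(C) is the same for all cycles C of f. -/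
/-!
`f` descends to a permutation `f̄` of `ℤ/n`, and the cycles of `f` are the preimages of the
`f̄`-orbits. For the cycle `C` through `i`, `n_f(C)` is the `f̄`-period `p` of `i mod n`, so `f^p`
is translation by `k_f(C) n` on `C`. If `f^N` is translation by `d n`, computing `f^(pN) i` in two
ways gives `N k_f(C) = p d`, i.e. `ν_f(C) = d / N`. Conversely `f̄^(n!) = id`, so
`f^(n!) i = i + d_i n` for every `i`, and the same computation on the cycle through `i` gives
`d_i = n! ν_f(C)`, which is independent of `i` when all slopes agree.
-/

open Function

section Orbit

variable {α : Type*} {g : α → α} {x : α}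

lemma ncard_range_iterate (hx : x ∈ periodicPts g) :
    (Set.range fun a => g^[a] x).ncard = minimalPeriod g x := by
  have hrange : (Set.range fun a => g^[a] x) = (fun a => g^[a] x) '' Set.Iio (minimalPeriod g x) :=
    Set.Subset.antisymm
      (fun _ ⟨a, ha⟩ => ⟨a % minimalPeriod g x,
        Nat.mod_lt _ (minimalPeriod_pos_of_mem_periodicPts hx),
        iterate_mod_minimalPeriod_eq.trans ha⟩)
      (Set.image_subset_range _ _)
  rw [hrange, iterate_injOn_Iio_minimalPeriod.ncard_image, ← Finset.coe_range,
    Set.ncard_coe_finset, Finset.card_range]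

lemma apply_mem_range_iterate_iff (hg : Injective g) (hx : x ∈ periodicPts g) {y : α} :
    g y ∈ Set.range (fun a => g^[a] x) ↔ y ∈ Set.range (fun a => g^[a] x) := by
  refine ⟨fun ⟨a, ha⟩ => ?_,
    fun ⟨a, ha⟩ => ⟨a + 1, by simp only [iterate_succ_apply', ← ha]⟩⟩
  have hp := minimalPeriod_pos_of_mem_periodicPts hx
  refine ⟨a + minimalPeriod g x - 1, hg ?_⟩
  simp only [← ha, ← iterate_succ_apply' g]
  rw [Nat.succ_eq_add_one, Nat.sub_add_cancel (by omega), iterate_add_minimalPeriod_eq]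

end Orbit

lemma intCast_zmod_eq_intCast_iff {n : ℕ} {a b : ℤ} :
    (a : ZMod n) = (b : ZMod n) ↔ ∃ c : ℤ, b = a + c * n := by
  rw [ZMod.intCast_eq_intCast_iff_dvd_sub]
  exact ⟨fun ⟨c, hc⟩ => ⟨c, by linear_combination hc⟩,
    fun ⟨c, hc⟩ => ⟨c, by rw [hc]; ring⟩⟩

section PeriodicSet

variable {n : ℕ} {C : Set ℤ}

lemma add_mul_mem_iff_of_periodic (hC : ∀ i : ℤ, i ∈ C ↔ i + n ∈ C) (i c : ℤ) :
    i + c * n ∈ C ↔ i ∈ C := by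
  have hper : Periodic (· ∈ C) (n : ℤ) := fun i => propext (hC i).symm
  exact Iff.of_eq (hper.int_mul c i)

lemma exists_add_mul_mem_Icc [NeZero n] (j : ℤ) :
    ∃ c : ℤ, j + c * n ∈ Set.Icc 1 (n : ℤ) := by
  have hn : (0 : ℤ) < n := by exact_mod_cast Nat.pos_of_neZero n
  refine ⟨-((j - 1) / n), ?_, ?_⟩ <;>
    nlinarith [Int.emod_def (j - 1) n, Int.emod_nonneg (j - 1) hn.ne',
      Int.emod_lt_of_pos (j - 1) hn]

lemma nOf_eq_ncard_image [NeZero n] (hC : ∀ i : ℤ, i ∈ C ↔ i + n ∈ C) :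
    nOf n C = (((↑) : ℤ → ZMod n) '' C).ncard := by
  have himage : ((↑) : ℤ → ZMod n) '' (C ∩ Set.Icc 1 n) = (↑) '' C := by
    refine Set.Subset.antisymm (Set.image_mono Set.inter_subset_left) ?_
    rintro _ ⟨j, hj, rfl⟩
    obtain ⟨c, hc⟩ := exists_add_mul_mem_Icc (n := n) j
    exact ⟨j + c * n, ⟨(add_mul_mem_iff_of_periodic hC j c).2 hj, hc⟩,
      intCast_zmod_eq_intCast_iff.2 ⟨-c, by ring⟩⟩
  have hinj : Set.InjOn ((↑) : ℤ → ZMod n) (C ∩ Set.Icc 1 n) := by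
    rintro a ⟨-, ha⟩ b ⟨-, hb⟩ hab
    rw [ZMod.intCast_eq_intCast_iff_dvd_sub] at hab
    have := Int.eq_zero_of_abs_lt_dvd hab
      (abs_sub_lt_iff.2 ⟨by linarith [ha.1, hb.2], by linarith [ha.2, hb.1]⟩)
    omega
  rw [nOf, ← hinj.ncard_image, himage]

lemma nOf_pos [NeZero n] (hC : ∀ i : ℤ, i ∈ C ↔ i + n ∈ C) (hne : C.Nonempty) :
    0 < nOf n C := by
  rw [nOf_eq_ncard_image hC]
  exact (Set.ncard_pos (Set.toFinite _)).2 (hne.image _)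

end PeriodicSet

namespace IsClosedSet

variable {n : ℕ} {f : ℤ → ℤ} {C : Set ℤ}

lemma iterate_mem_iff (hC : IsClosedSet n f C) (a : ℕ) (i : ℤ) : f^[a] i ∈ C ↔ i ∈ C := by
  induction a with
  | zero => rfl
  | succ a ih => rw [iterate_succ_apply', ← hC.2.2, ih]

end IsClosedSet

/-- The permutation `f̄` of `ℤ/n`; the choice of representative `x.cast` is immaterial since
`f (i + n) = f i + n`. -/
def reduceMod (n : ℕ) (f : ℤ → ℤ) (x : ZMod n) : ZMod n := f x.cast

/-- The cycle of `f` through `i`: the integers whose residue lies in the orbit of `i mod n`. -/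
def cycleThrough (n : ℕ) (f : ℤ → ℤ) (i : ℤ) : Set ℤ :=
  (↑) ⁻¹' Set.range fun a => (reduceMod n f)^[a] (i : ZMod n)

namespace IsAffinePerm

variable {n : ℕ} {f : ℤ → ℤ}

lemma map_add_mul (hf : IsAffinePerm n f) (i c : ℤ) : f (i + c * n) = f i + c * n := by
  have hper : Periodic (fun i => f i - i) (n : ℤ) := fun i => by simp only [hf.2]; ring
  have h := hper.int_mul c i
  simp only [Int.cast_id] at h
  linarith

lemma commute_add_mul (hf : IsAffinePerm n f) (c : ℤ) : Function.Commute f (· + c * n) :=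
  fun i => hf.map_add_mul i c

lemma iterate_add_mul (hf : IsAffinePerm n f) (a : ℕ) (i c : ℤ) :
    f^[a] (i + c * n) = f^[a] i + c * n :=
  (hf.commute_add_mul c).iterate_left a i

lemma iterate_mul_apply_of_iterate_eq_add (hf : IsAffinePerm n f) {m : ℕ} {i k : ℤ}
    (hk : f^[m] i = i + k * n) (t : ℕ) : f^[m * t] i = i + t * k * n := by
  induction t with
  | zero => simp
  | succ t ih =>
    rw [iterate_mul, iterate_succ_apply', ← iterate_mul, ih, hf.iterate_add_mul, hk]
    push_cast
    ring

lemma mul_eq_mul_of_iterate_eq_add [NeZero n] (hf : IsAffinePerm n f) {m N : ℕ} {i k d : ℤ}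
    (hk : f^[m] i = i + k * n) (hd : f^[N] i = i + d * n) : (N * k : ℤ) = m * d := by
  have h := hf.iterate_mul_apply_of_iterate_eq_add hk N
  rw [mul_comm, hf.iterate_mul_apply_of_iterate_eq_add hd m] at h
  have hn : (n : ℤ) ≠ 0 := by exact_mod_cast NeZero.ne n
  exact (mul_left_inj' hn).1 (by linarith)

lemma semiconj_intCast_reduceMod (hf : IsAffinePerm n f) :
    Semiconj ((↑) : ℤ → ZMod n) f (reduceMod n f) := fun j => by
  obtain ⟨c, hc⟩ := intCast_zmod_eq_intCast_iff.1 (ZMod.intCast_zmod_cast (j : ZMod n)).symm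
  rw [reduceMod, hc, hf.map_add_mul]
  simp

lemma iterate_reduceMod_intCast (hf : IsAffinePerm n f) (a : ℕ) (j : ℤ) :
    (reduceMod n f)^[a] j = (f^[a] j : ZMod n) :=
  ((hf.semiconj_intCast_reduceMod.iterate_right a) j).symm

lemma reduceMod_injective (hf : IsAffinePerm n f) : Injective (reduceMod n f) := by
  intro x y hxy
  obtain ⟨a, rfl⟩ := ZMod.intCast_surjective x
  obtain ⟨b, rfl⟩ := ZMod.intCast_surjective y
  rw [← hf.semiconj_intCast_reduceMod, ← hf.semiconj_intCast_reduceMod] at hxy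
  obtain ⟨c, hc⟩ := intCast_zmod_eq_intCast_iff.1 hxy
  rw [← hf.map_add_mul] at hc
  rw [hf.1.1 hc]
  simp

lemma exists_iterate_factorial_eq_add [NeZero n] (hf : IsAffinePerm n f) (i : ℤ) :
    ∃ d : ℤ, f^[n.factorial] i = i + d * n := by
  have h := congrFun (injective_iff_iterate_factorial_card_eq_id.1 hf.reduceMod_injective) i
  rw [ZMod.card, iterate_reduceMod_intCast hf] at h
  exact intCast_zmod_eq_intCast_iff.1 h.symm

lemma mem_cycleThrough_iff (hf : IsAffinePerm n f) {i j : ℤ} :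
    j ∈ cycleThrough n f i ↔ ∃ (a : ℕ) (c : ℤ), j = f^[a] i + c * n := by
  simp only [cycleThrough, Set.mem_preimage, Set.mem_range, hf.iterate_reduceMod_intCast,
    intCast_zmod_eq_intCast_iff]

lemma isClosedSet_cycleThrough [NeZero n] (hf : IsAffinePerm n f) (i : ℤ) :
    IsClosedSet n f (cycleThrough n f i) := by
  refine ⟨⟨i, 0, rfl⟩, fun j => by simp [cycleThrough], fun j => ?_⟩
  simp only [cycleThrough, Set.mem_preimage]
  rw [hf.semiconj_intCast_reduceMod j]
  exact (apply_mem_range_iterate_iff hf.reduceMod_injective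
    (hf.reduceMod_injective.mem_periodicPts _)).symm

lemma isCycleOf_cycleThrough [NeZero n] (hf : IsAffinePerm n f) (i : ℤ) :
    IsCycleOf n f (cycleThrough n f i) := by
  refine ⟨hf.isClosedSet_cycleThrough i, fun C hsub hC => hsub.antisymm ?_⟩
  obtain ⟨j, hj⟩ := hC.1
  obtain ⟨a, c, rfl⟩ := hf.mem_cycleThrough_iff.1 (hsub hj)
  have hi : i ∈ C := (hC.iterate_mem_iff a i).1 ((add_mul_mem_iff_of_periodic hC.2.1 _ c).1 hj)
  intro j hj
  obtain ⟨b, c', rfl⟩ := hf.mem_cycleThrough_iff.1 hj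
  exact (add_mul_mem_iff_of_periodic hC.2.1 _ c').2 ((hC.iterate_mem_iff b i).2 hi)

lemma nOf_cycleThrough [NeZero n] (hf : IsAffinePerm n f) (i : ℤ) :
    nOf n (cycleThrough n f i) = minimalPeriod (reduceMod n f) i := by
  rw [nOf_eq_ncard_image (hf.isClosedSet_cycleThrough i).2.1, cycleThrough,
    Set.image_preimage_eq _ ZMod.intCast_surjective,
    ncard_range_iterate (hf.reduceMod_injective.mem_periodicPts _)]

lemma exists_iterate_nOf_cycleThrough [NeZero n] (hf : IsAffinePerm n f) (i : ℤ) :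
    ∃ k : ℤ, ∀ j ∈ cycleThrough n f i, f^[nOf n (cycleThrough n f i)] j = j + k * n := by
  have hi := iterate_minimalPeriod (f := reduceMod n f) (x := (i : ZMod n))
  rw [hf.iterate_reduceMod_intCast, ← hf.nOf_cycleThrough] at hi
  obtain ⟨k, hk⟩ := intCast_zmod_eq_intCast_iff.1 hi.symm
  refine ⟨k, fun j hj => ?_⟩
  obtain ⟨a, c, rfl⟩ := hf.mem_cycleThrough_iff.1 hj
  rw [hf.iterate_add_mul, ← iterate_add_apply, Nat.add_comm, iterate_add_apply, hk,
    hf.iterate_add_mul]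
  ring

end IsAffinePerm

open IsAffinePerm in
/-- `f` has finite order modulo translations (some power of `f` equals translation by a
multiple of `n`) if and only if all cycles of `f` have the same slope `ν_f(C) = k_f(C)/n_f(C)`,
where `k_f(C)` is characterized by `f^[n_f C] i = i + k_f(C) * n` for all `i ∈ C`. -/
theorem stmt_6 (n : ℕ) (hn : 1 ≤ n) (f : ℤ → ℤ) (hf : IsAffinePerm n f) :
    (∃ N : ℕ, 1 ≤ N ∧ ∃ d : ℤ, ∀ i : ℤ, f^[N] i = i + d * n) ↔
    (∃ ν : ℚ, ∀ C : Set ℤ, IsCycleOf n f C →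
      ∀ k : ℤ, (∀ i ∈ C, f^[nOf n C] i = i + k * n) →
        (k : ℚ) / (nOf n C : ℚ) = ν) := by
  have : NeZero n := ⟨by omega⟩
  constructor
  · rintro ⟨N, hN, d, hd⟩
    refine ⟨d / N, fun C hC k hk => ?_⟩
    obtain ⟨i, hi⟩ := hC.1.1
    have hm := nOf_pos hC.1.2.1 hC.1.1
    have h := hf.mul_eq_mul_of_iterate_eq_add (hk i hi) (hd i)
    rw [div_eq_div_iff (by positivity) (by positivity)]
    exact_mod_cast (by linarith : k * (N : ℤ) = d * nOf n C)
  · rintro ⟨ν, hν⟩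
    have hslope (i : ℤ) :
        ∃ d : ℤ, f^[n.factorial] i = i + d * n ∧ (d : ℚ) = n.factorial * ν := by
      obtain ⟨d, hd⟩ := hf.exists_iterate_factorial_eq_add i
      obtain ⟨k, hk⟩ := hf.exists_iterate_nOf_cycleThrough i
      have hi : i ∈ cycleThrough n f i := ⟨0, rfl⟩
      have hm := nOf_pos (hf.isClosedSet_cycleThrough i).2.1 ⟨i, hi⟩
      have h := hf.mul_eq_mul_of_iterate_eq_add (hk i hi) hd
      refine ⟨d, hd, ?_⟩
      rw [← hν _ (hf.isCycleOf_cycleThrough i) k hk]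
      field_simp
      exact_mod_cast (by linarith : d * nOf n (cycleThrough n f i) = (n.factorial * k : ℤ))
    obtain ⟨d, -, hd⟩ := hslope 0
    refine ⟨n.factorial, Nat.factorial_pos n, d, fun i => ?_⟩
    obtain ⟨d', hi, hd'⟩ := hslope i
    rwa [show d' = d by exact_mod_cast hd'.trans hd.symm] at hi
end

section
/- For an affine permutation g of period n with k(g) = k and having a single cycle (i.e., the induced permutation of ℤ/nℤ is an n-cycle considered together with the period structure so that g has exactly one cycle), the Coxeter length ℓ(g) satisfies ℓ(g) ≥ gcd(k, n) − 1. -/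
/-- `k(f) = (1/n) ∑_{i=1}^n (f i - i)`, as a rational number. -/
noncomputable def kOf (n : ℕ) (f : ℤ → ℤ) : ℚ :=
  ((∑ i ∈ Finset.Icc (1 : ℤ) (n : ℤ), (f i - i) : ℤ) : ℚ) / (n : ℚ)

/-- The Coxeter length `ℓ(f) = #{(i,j) : i < j, f i > f j, 1 ≤ i ≤ n}`. -/
noncomputable def lenOf (n : ℕ) (f : ℤ → ℤ) : ℕ :=
  {p : ℤ × ℤ | p.1 < p.2 ∧ f p.2 < f p.1 ∧ 1 ≤ p.1 ∧ p.1 ≤ (n : ℤ)}.ncard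

/-!
If some value `v + 1` of `g` occurs to the left of the value `v`, compose `g` on the left with the
affine transposition exchanging `v + m n` and `v + 1 + m n` for all `m`. This removes at least one
inversion, does not change `k`, and creates at most one new cycle, so `ℓ(g) + #cycles(g)` does not
increase. When no such pair is left, `g⁻¹` is strictly increasing, so `g` is the translation
`x ↦ x + k`, each cycle of which lies in a single residue class modulo `gcd(k, n)`. Hence
`gcd(k, n) ≤ ℓ(g) + #cycles(g)` for every affine permutation `g`.
-/

open Function

lemma IsAffinePerm.comp {n : ℕ} {f g : ℤ → ℤ} (hf : IsAffinePerm n f) (hg : IsAffinePerm n g) :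
    IsAffinePerm n (f ∘ g) :=
  ⟨hf.1.comp hg.1, fun x => by simp only [comp_apply, hg.2, hf.2]⟩

namespace AffinePerm

variable {n : ℕ}

lemma periodic_sub_self {f : ℤ → ℤ} (hf : ∀ x, f (x + n) = f x + n) :
    Periodic (fun x => f x - x) (n : ℤ) :=
  fun x => by simp only [hf]; ring

lemma map_add_mul {f : ℤ → ℤ} (hf : ∀ x, f (x + n) = f x + n) (m x : ℤ) :
    f (x + m * n) = f x + m * n := by
  have := (periodic_sub_self hf).int_mul m x
  simp only [Int.cast_id] at this
  linarith

lemma exists_add_mul_mem_Icc (hn : 1 ≤ n) (x : ℤ) : ∃ m : ℤ, x + m * n ∈ Set.Icc (1 : ℤ) n := by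
  have hn0 : (0 : ℤ) < n := by exact_mod_cast hn
  have h1 := Int.emod_nonneg (x - 1) hn0.ne'
  have h2 := Int.emod_lt_of_pos (x - 1) hn0
  have h3 := Int.emod_def (x - 1) n
  exact ⟨-((x - 1) / n), by constructor <;> linarith⟩

lemma exists_abs_sub_le (hn : 1 ≤ n) {f : ℤ → ℤ} (hf : ∀ x, f (x + n) = f x + n) :
    ∃ B, ∀ x, |f x - x| ≤ B := by
  obtain ⟨B, hB⟩ := ((Finset.Icc (1 : ℤ) n).image fun j => |f j - j|).bddAbove
  refine ⟨B, fun x => ?_⟩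
  obtain ⟨m, hm⟩ := exists_add_mul_mem_Icc hn x
  have := hB (Finset.mem_coe.2 (Finset.mem_image_of_mem _ (Finset.mem_Icc.2 hm)))
  rwa [map_add_mul hf, add_sub_add_right_eq_sub] at this

lemma two_le_of_lt_of_eq_add_one (hn : 1 ≤ n) {f : ℤ → ℤ} (hf : ∀ x, f (x + n) = f x + n)
    {a b : ℤ} (hab : a < b) (h : f a = f b + 1) : 2 ≤ n := by
  by_contra hn2
  obtain rfl : n = 1 := by omega
  have := map_add_mul hf (b - a) a
  simp only [Nat.cast_one, mul_one, add_sub_cancel] at this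
  omega

lemma eq_add_of_strictMono_of_surjective {h : ℤ → ℤ} (hmono : StrictMono h)
    (hsurj : Surjective h) (x : ℤ) : h x = x + h 0 := by
  have hstep : ∀ y, h (y + 1) = h y + 1 := by
    intro y
    obtain ⟨z, hz⟩ := hsurj (h y + 1)
    have hyz : y < z := hmono.lt_iff_lt.1 (by omega)
    have := hmono.monotone (show y + 1 ≤ z by omega)
    have := hmono (lt_add_one y)
    omega
  simpa [add_comm] using map_add_mul (n := 1) (by exact_mod_cast hstep) x 0

lemma exists_eq_add_of_forall_ne_add_one {g : ℤ → ℤ} (hg : Bijective g)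
    (h : ∀ a b, a < b → g a ≠ g b + 1) : ∃ c, ∀ x, g x = x + c := by
  set e := Equiv.ofBijective g hg
  have hmono : StrictMono e.symm := strictMono_int_of_lt_succ fun y => by
    rcases lt_trichotomy (e.symm y) (e.symm (y + 1)) with hlt | heq | hgt
    · exact hlt
    · exact absurd (e.symm.injective heq) (by omega)
    · exact absurd (by simp only [e, Equiv.ofBijective_apply_symm_apply]) (h _ _ hgt)
  refine ⟨-e.symm 0, fun x => ?_⟩
  have := eq_add_of_strictMono_of_surjective hmono e.symm.surjective (g x)
  rw [show e.symm (g x) = x from e.symm_apply_apply x] at this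
  omega

section Displacement

noncomputable def displacement (n : ℕ) (f : ℤ → ℤ) : ℤ := ∑ x ∈ Finset.Icc (1 : ℤ) n, (f x - x)

lemma sum_Icc_comp (hn : 1 ≤ n) {g : ℤ → ℤ} (hg : IsAffinePerm n g) {φ : ℤ → ℤ}
    (hφ : Periodic φ n) : ∑ x ∈ Finset.Icc (1 : ℤ) n, φ (g x) = ∑ x ∈ Finset.Icc (1 : ℤ) n, φ x := by
  classical
  choose m hm using exists_add_mul_mem_Icc hn
  set ρ : ℤ → ℤ := fun x => g x + m (g x) * n
  have hρ : Set.InjOn ρ (Finset.Icc (1 : ℤ) n) := by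
    intro x hx y hy hxy
    have hxy' : x + m (g x) * n = y + m (g y) * n :=
      hg.1.1 (by simpa only [map_add_mul hg.2] using hxy)
    simp only [Finset.coe_Icc, Set.mem_Icc] at hx hy
    have : x - y = 0 := Int.eq_zero_of_abs_lt_dvd (m := n)
      ⟨m (g y) - m (g x), by linear_combination hxy'⟩ (abs_lt.2 ⟨by omega, by omega⟩)
    omega
  have himage : (Finset.Icc (1 : ℤ) n).image ρ = Finset.Icc (1 : ℤ) n :=
    Finset.eq_of_subset_of_card_le (Finset.image_subset_iff.2 fun x _ => Finset.mem_Icc.2 (hm _))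
      (Finset.card_image_of_injOn hρ).ge
  calc ∑ x ∈ Finset.Icc (1 : ℤ) n, φ (g x) = ∑ x ∈ Finset.Icc (1 : ℤ) n, φ (ρ x) :=
        Finset.sum_congr rfl fun x _ => by simpa using (hφ.int_mul (m (g x)) (g x)).symm
    _ = ∑ x ∈ Finset.Icc (1 : ℤ) n, φ x := by rw [← Finset.sum_image hρ, himage]

lemma displacement_comp (hn : 1 ≤ n) {f g : ℤ → ℤ} (hf : ∀ x, f (x + n) = f x + n)
    (hg : IsAffinePerm n g) : displacement n (f ∘ g) = displacement n f + displacement n g := by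
  calc displacement n (f ∘ g)
      = ∑ x ∈ Finset.Icc (1 : ℤ) n, ((f (g x) - g x) + (g x - x)) := by
        simp only [displacement, comp_apply, sub_add_sub_cancel]
    _ = displacement n f + displacement n g := by
        rw [Finset.sum_add_distrib, sum_Icc_comp hn hg (periodic_sub_self hf), displacement,
          displacement]

end Displacement

section AffineSwap

/-- For `2 ≤ n`, the affine transposition exchanging `v + m n` and `v + 1 + m n` for every `m`
(for `n = 1` it is the translation by `1`). -/
def affineSwap (n : ℕ) (v x : ℤ) : ℤ :=
  if x ≡ v [ZMOD n] then x + 1 else if x ≡ v + 1 [ZMOD n] then x - 1 else x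

variable {v x : ℤ}

lemma affineSwap_of_modEq (h : x ≡ v [ZMOD n]) : affineSwap n v x = x + 1 := if_pos h

lemma affineSwap_of_modEq_add_one (hn : 2 ≤ n) (h : x ≡ v + 1 [ZMOD n]) :
    affineSwap n v x = x - 1 := by
  have hv : ¬ x ≡ v [ZMOD n] := fun hv => by
    have := Int.le_of_dvd one_pos ((hv.symm.trans h).dvd.trans (by simp))
    omega
  rw [affineSwap, if_neg hv, if_pos h]

lemma affineSwap_of_not_modEq (h : ¬ x ≡ v [ZMOD n]) (h' : ¬ x ≡ v + 1 [ZMOD n]) :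
    affineSwap n v x = x := by
  rw [affineSwap, if_neg h, if_neg h']

lemma modEq_of_affineSwap_eq_add_one (h : affineSwap n v x = x + 1) : x ≡ v [ZMOD n] := by
  unfold affineSwap at h
  split_ifs at h with h1 <;> first | exact h1 | omega

lemma affineSwap_mem_Icc : affineSwap n v x ∈ Set.Icc (x - 1) (x + 1) := by
  unfold affineSwap
  split_ifs <;> constructor <;> omega

lemma affineSwap_add (x : ℤ) : affineSwap n v (x + n) = affineSwap n v x + n := by
  have hmod : ∀ w : ℤ, x + n ≡ w [ZMOD n] ↔ x ≡ w [ZMOD n] := fun w => by simp [Int.ModEq]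
  simp only [affineSwap, hmod]
  split_ifs <;> ring

lemma affineSwap_affineSwap (hn : 2 ≤ n) (v x : ℤ) : affineSwap n v (affineSwap n v x) = x := by
  by_cases h : x ≡ v [ZMOD n]
  · rw [affineSwap_of_modEq h, affineSwap_of_modEq_add_one hn (h.add_right 1), add_sub_cancel_right]
  by_cases h' : x ≡ v + 1 [ZMOD n]
  · have : x - 1 ≡ v [ZMOD n] := by simpa using h'.sub_right 1
    rw [affineSwap_of_modEq_add_one hn h', affineSwap_of_modEq this, sub_add_cancel]
  · rw [affineSwap_of_not_modEq h h', affineSwap_of_not_modEq h h']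

lemma isAffinePerm_affineSwap (hn : 2 ≤ n) (v : ℤ) : IsAffinePerm n (affineSwap n v) :=
  ⟨Involutive.bijective (affineSwap_affineSwap hn v), affineSwap_add⟩

lemma displacement_affineSwap (hn : 2 ≤ n) (v : ℤ) : displacement n (affineSwap n v) = 0 := by
  have h := displacement_comp (by omega) (affineSwap_add (v := v)) (isAffinePerm_affineSwap hn v)
  rw [show affineSwap n v ∘ affineSwap n v = id from funext (affineSwap_affineSwap hn v)] at h
  have hid : displacement n id = 0 := by simp [displacement]
  omega

lemma modEq_of_lt_of_affineSwap_lt {y : ℤ} (hxy : x < y)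
    (h : affineSwap n v y < affineSwap n v x) : x ≡ v [ZMOD n] ∧ y = x + 1 := by
  have hx := affineSwap_mem_Icc (n := n) (v := v) (x := x)
  have hy := affineSwap_mem_Icc (n := n) (v := v) (x := y)
  simp only [Set.mem_Icc] at hx hy
  exact ⟨modEq_of_affineSwap_eq_add_one (by omega), by omega⟩

end AffineSwap

section Inversions

def invSet (n : ℕ) (f : ℤ → ℤ) : Set (ℤ × ℤ) :=
  {p | p.1 < p.2 ∧ f p.2 < f p.1 ∧ 1 ≤ p.1 ∧ p.1 ≤ (n : ℤ)}

lemma invSet_finite (hn : 1 ≤ n) {f : ℤ → ℤ} (hf : ∀ x, f (x + n) = f x + n) :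
    (invSet n f).Finite := by
  obtain ⟨B, hB⟩ := exists_abs_sub_le hn hf
  refine (Set.finite_Icc ((1 : ℤ), (1 : ℤ)) (n, n + 2 * B)).subset ?_
  rintro ⟨a, b⟩ ⟨hab, hba, ha1, han⟩
  dsimp only at hab hba ha1 han
  have := abs_le.1 (hB a)
  have := abs_le.1 (hB b)
  simp only [Set.mem_Icc, Prod.mk_le_mk]
  omega

/-- No inversion is created, and the translate of `(a, b)` with first entry in `[1, n]` is
removed. -/
lemma lenOf_affineSwap_comp_lt (hn : 2 ≤ n) {g : ℤ → ℤ} (hg : IsAffinePerm n g) {a b : ℤ}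
    (hab : a < b) (hgab : g a = g b + 1) : lenOf n (affineSwap n (g b) ∘ g) < lenOf n g := by
  have hsub : invSet n (affineSwap n (g b) ∘ g) ⊆ invSet n g := by
    rintro ⟨x, y⟩ ⟨hxy, hsxy, hx⟩
    refine ⟨hxy, lt_of_not_ge fun hle => ?_, hx⟩
    dsimp only [comp_apply] at hxy hsxy hle
    obtain ⟨hmod, hadj⟩ :=
      modEq_of_lt_of_affineSwap_lt (lt_of_le_of_ne hle (hg.1.1.ne hxy.ne)) hsxy
    obtain ⟨t, ht⟩ := Int.modEq_iff_add_fac.1 hmod.symm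
    have hxb : x = b + t * n := hg.1.1 (by rw [map_add_mul hg.2]; linarith)
    have hya : y = a + t * n := hg.1.1 (by rw [map_add_mul hg.2]; linarith)
    omega
  have hsga : affineSwap n (g b) (g a) = g b := by
    rw [hgab, affineSwap_of_modEq_add_one hn (Int.ModEq.refl _), add_sub_cancel_right]
  have hsgb : affineSwap n (g b) (g b) = g a := by
    rw [affineSwap_of_modEq (Int.ModEq.refl _), hgab]
  have hsg := ((isAffinePerm_affineSwap hn (g b)).comp hg).2
  obtain ⟨m, hm⟩ := exists_add_mul_mem_Icc (by omega : 1 ≤ n) a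
  refine Set.ncard_lt_ncard ((Set.ssubset_iff_of_subset hsub).2
    ⟨(a + m * n, b + m * n), ⟨by simpa using hab, ?_, hm⟩, fun ⟨_, h, _⟩ => ?_⟩)
    (invSet_finite (by omega) hg.2)
  · dsimp only
    rw [map_add_mul hg.2, map_add_mul hg.2]
    omega
  · have ha := map_add_mul hsg m a
    have hb := map_add_mul hsg m b
    dsimp only [comp_apply] at h ha hb
    omega

end Inversions

section Cycles

lemma card_quot_le_card_quot_adjoin_add_one {α : Type*} (r : α → α → Prop) [Finite (Quot r)]
    (a b : α) : Nat.card (Quot r) ≤ Nat.card (Quot fun x y => r x y ∨ x = a ∧ y = b) + 1 := by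
  classical
  set r' : α → α → Prop := fun x y => r x y ∨ x = a ∧ y = b
  let π : Quot r → Quot r' := Quot.lift (Quot.mk r') fun x y h => Quot.sound (Or.inl h)
  have : Finite (Quot r') := Finite.of_surjective π (Quot.ind fun x => ⟨Quot.mk r x, rfl⟩)
  -- `merge` identifies the classes of `a` and `b`, so it factors through `π`
  let merge : Quot r → Quot r := fun q => if q = Quot.mk r b then Quot.mk r a else q
  let F : Quot r' → Quot r := Quot.lift (fun x => merge (Quot.mk r x)) (by
    rintro x y (h | ⟨rfl, rfl⟩)
    · simp only [Quot.sound h]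
    · simp only [merge]
      split_ifs with h <;> simp_all)
  let ψ : Quot r → Option (Quot r') := fun q => if q = Quot.mk r b then none else some (π q)
  have hψ : Injective ψ := by
    intro p q h
    by_cases hp : p = Quot.mk r b <;> by_cases hq : q = Quot.mk r b <;>
      simp only [ψ, hp, hq, if_true, if_false, reduceCtorEq, Option.some_inj] at h
    · rw [hp, hq]
    · have hF : ∀ q, F (π q) = merge q := Quot.ind fun _ => rfl
      simpa only [hF, merge, hp, hq, if_false] using congrArg F h
  calc Nat.card (Quot r) ≤ Nat.card (Option (Quot r')) := Nat.card_le_card_of_injective ψ hψ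
    _ = Nat.card (Quot r') + 1 := Finite.card_option

lemma quot_mk_add_mul {r : ℤ → ℤ → Prop} (hr : ∀ x, r x (x + n)) (m x : ℤ) :
    Quot.mk r (x + m * n) = Quot.mk r x := by
  have hper : Periodic (Quot.mk r) (n : ℤ) := fun x => (Quot.sound (hr x)).symm
  simpa using hper.int_mul m x

lemma quot_mk_affineSwap (hn : 2 ≤ n) {r : ℤ → ℤ → Prop} (hr : ∀ x, r x (x + n)) {v : ℤ}
    (hv : r v (v + 1)) (x : ℤ) : Quot.mk r (affineSwap n v x) = Quot.mk r x := by
  have hstep : ∀ y, y ≡ v [ZMOD n] → Quot.mk r (y + 1) = Quot.mk r y := fun y hy => by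
    obtain ⟨t, rfl⟩ := Int.modEq_iff_add_fac.1 hy.symm
    rw [show v + n * t + 1 = v + 1 + t * n by ring, show v + n * t = v + t * n by ring,
      quot_mk_add_mul hr, quot_mk_add_mul hr]
    exact (Quot.sound hv).symm
  by_cases h : x ≡ v [ZMOD n]
  · rw [affineSwap_of_modEq h, hstep x h]
  by_cases h' : x ≡ v + 1 [ZMOD n]
  · rw [affineSwap_of_modEq_add_one hn h', ← hstep (x - 1) (by simpa using h'.sub_right 1),
      sub_add_cancel]
  · rw [affineSwap_of_not_modEq h h']

/-- The equivalence classes generated by this relation are the cycles of `f`. -/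
def cycleRel (n : ℕ) (f : ℤ → ℤ) (x y : ℤ) : Prop := y = f x ∨ y = x + n

noncomputable def numCycles (n : ℕ) (f : ℤ → ℤ) : ℕ := Nat.card (Quot (cycleRel n f))

lemma finite_quot_cycleRel (hn : 1 ≤ n) (f : ℤ → ℤ) : Finite (Quot (cycleRel n f)) := by
  refine Finite.of_surjective (fun j : Set.Icc (1 : ℤ) n => Quot.mk _ (j : ℤ))
    (Quot.ind fun x => ?_)
  obtain ⟨m, hm⟩ := exists_add_mul_mem_Icc hn x
  exact ⟨⟨_, hm⟩, quot_mk_add_mul (fun _ => Or.inr rfl) m x⟩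

lemma numCycles_eq_one_of_isCycleOf_univ {f : ℤ → ℤ} (h : IsCycleOf n f Set.univ) :
    numCycles n f = 1 := by
  set C : Set ℤ := {y | Quot.mk (cycleRel n f) y = Quot.mk _ 0}
  have hadd : ∀ y, Quot.mk (cycleRel n f) (y + n) = Quot.mk _ y :=
    fun y => (Quot.sound (r := cycleRel n f) (Or.inr rfl)).symm
  have happly : ∀ y, Quot.mk (cycleRel n f) (f y) = Quot.mk _ y :=
    fun y => (Quot.sound (r := cycleRel n f) (Or.inl rfl)).symm
  have hC : IsClosedSet n f C :=
    ⟨⟨0, rfl⟩, fun y => by simp only [C, Set.mem_ofPred_eq, hadd],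
      fun y => by simp only [C, Set.mem_ofPred_eq, happly]⟩
  have hCuniv : ∀ y, y ∈ C := fun y => (h.2 C (Set.subset_univ C) hC).symm ▸ Set.mem_univ y
  have : Subsingleton (Quot (cycleRel n f)) :=
    ⟨Quot.ind fun x => Quot.ind fun y => (hCuniv x).trans (hCuniv y).symm⟩
  exact Nat.card_of_subsingleton (Quot.mk _ 0)

lemma le_numCycles_of_dvd (hn : 1 ≤ n) {f : ℤ → ℤ} {d : ℕ} (hdn : d ∣ n)
    (hd : ∀ x, (d : ℤ) ∣ f x - x) : d ≤ numCycles n f := by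
  have := finite_quot_cycleRel hn f
  let F : Quot (cycleRel n f) → ZMod d := Quot.lift (fun x : ℤ => (x : ZMod d)) (by
    rintro x y (rfl | rfl)
    · exact (ZMod.intCast_eq_intCast_iff_dvd_sub _ _ _).2 (hd x)
    · exact (ZMod.intCast_eq_intCast_iff_dvd_sub _ _ _).2
        (by simpa using Int.natCast_dvd_natCast.2 hdn))
  have hF : Surjective F := fun z => by
    obtain ⟨x, rfl⟩ := ZMod.intCast_surjective z
    exact ⟨Quot.mk _ x, rfl⟩
  calc d = Nat.card (ZMod d) := (Nat.card_zmod d).symm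
    _ ≤ numCycles n f := Nat.card_le_card_of_surjective F hF

lemma numCycles_affineSwap_comp_le (hn : 2 ≤ n) (f : ℤ → ℤ) (v : ℤ) :
    numCycles n (affineSwap n v ∘ f) ≤ numCycles n f + 1 := by
  set r' : ℤ → ℤ → Prop := fun x y => cycleRel n (affineSwap n v ∘ f) x y ∨ x = v ∧ y = v + 1
  have hr' : ∀ x, r' x (x + n) := fun x => Or.inl (Or.inr rfl)
  have := finite_quot_cycleRel (by omega : 1 ≤ n) f
  have := finite_quot_cycleRel (by omega : 1 ≤ n) (affineSwap n v ∘ f)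
  let F : Quot (cycleRel n f) → Quot r' := Quot.lift (Quot.mk r') (by
    rintro x y (rfl | rfl)
    · rw [← quot_mk_affineSwap hn hr' (Or.inr ⟨rfl, rfl⟩) (f x)]
      exact Quot.sound (Or.inl (Or.inl rfl))
    · exact Quot.sound (hr' x))
  have hF : Surjective F := Quot.ind fun x => ⟨Quot.mk _ x, rfl⟩
  calc numCycles n (affineSwap n v ∘ f) ≤ Nat.card (Quot r') + 1 :=
        card_quot_le_card_quot_adjoin_add_one _ v (v + 1)
    _ ≤ numCycles n f + 1 := by gcongr; exact Nat.card_le_card_of_surjective F hF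

end Cycles

theorem gcd_le_lenOf_add_numCycles (hn : 1 ≤ n) {g : ℤ → ℤ} (hg : IsAffinePerm n g) {k : ℤ}
    (hk : displacement n g = k * n) : Int.gcd k n ≤ lenOf n g + numCycles n g := by
  induction hℓ : lenOf n g using Nat.strong_induction_on generalizing g with
  | _ ℓ ih =>
  by_cases hdes : ∃ a b, a < b ∧ g a = g b + 1
  · obtain ⟨a, b, hab, hgab⟩ := hdes
    have hn2 : 2 ≤ n := two_le_of_lt_of_eq_add_one hn hg.2 hab hgab
    have hs := isAffinePerm_affineSwap hn2 (g b)
    have hk' : displacement n (affineSwap n (g b) ∘ g) = k * n := by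
      rw [displacement_comp hn hs.2 hg, displacement_affineSwap hn2, zero_add, hk]
    have hlen := lenOf_affineSwap_comp_lt hn2 hg hab hgab
    have hcyc := numCycles_affineSwap_comp_le hn2 g (g b)
    have := ih _ (hℓ ▸ hlen) (hs.comp hg) hk' rfl
    omega
  · push Not at hdes
    obtain ⟨c, hc⟩ := exists_eq_add_of_forall_ne_add_one hg.1 hdes
    have hck : c = k := by
      have hdisp : displacement n g = n * c := by simp [displacement, hc]
      exact mul_left_cancel₀ (by omega : (n : ℤ) ≠ 0) (hdisp.symm.trans (hk.trans (mul_comm _ _)))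
    rw [hck] at hc
    exact (le_numCycles_of_dvd hn (Int.natCast_dvd_natCast.1 (Int.gcd_dvd_right k n))
      fun x => by rw [hc, add_sub_cancel_left]; exact Int.gcd_dvd_left k n).trans
      (Nat.le_add_left _ _)

end AffinePerm

/-- For an affine permutation `g` of period `n` with `k(g) = k` having a single cycle
(i.e. `ℤ` itself is a cycle of `g`), the length satisfies `ℓ(g) ≥ gcd(k, n) - 1`. -/
theorem stmt_9 (n : ℕ) (hn : 1 ≤ n) (g : ℤ → ℤ) (hg : IsAffinePerm n g)
    (k : ℤ) (hk : kOf n g = (k : ℚ))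
    (hcyc : IsCycleOf n g Set.univ) :
    Int.gcd k (n : ℤ) - 1 ≤ lenOf n g := by
  have hdisp : AffinePerm.displacement n g = k * n := by
    rw [kOf, div_eq_iff (by positivity)] at hk
    exact_mod_cast hk
  have := AffinePerm.gcd_le_lenOf_add_numCycles hn hg hdisp
  rw [AffinePerm.numCycles_eq_one_of_isCycleOf_univ hcyc] at this
  omega
end

section
/- For a finite vector configuration E = {e_1, ..., e_m} ⊂ ℤ², the area of the zonotope Z(E) = [0,e_1] + [0,e_2] + ... + [0,e_m] (Minkowski sum of segments) equals Σ_{1 ≤ i < j ≤ m} |det(e_i, e_j)|. -/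
open Pointwise MeasureTheory

open Pointwise MeasureTheory in
/-- The segment `[0, v] = {t • v : t ∈ [0,1]}` in `ℝ²`. -/
def seg (v : ℝ × ℝ) : Set (ℝ × ℝ) := {x | ∃ t : ℝ, t ∈ Set.Icc (0 : ℝ) 1 ∧ x = t • v}

/-!
Induction on the number of segments. A determinant-one linear map sends the new vector `u` to a
vertical vector `(0, c)`. For compact convex `K`, every vertical slice of `K + [0, (0, c)]` is the
slice of `K` lengthened by `|c|`, so by Fubini
`area (K + [0, (0, c)]) = area K + |c| · length (pr₁ K)`.
The projection of the image of the zonotope is a sum of intervals of total length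
`∑ᵢ |det(eᵢ, u)| / |c|`, so adding `[0, u]` adds exactly `∑ᵢ |det(eᵢ, u)|` to the area.
-/

open Set

lemma seg_eq_segment (v : ℝ × ℝ) : seg v = segment ℝ 0 v := by
  ext x
  simp [seg, segment_eq_image, eq_comm]

lemma isCompact_segment {E : Type*} [AddCommGroup E] [Module ℝ E] [TopologicalSpace E]
    [IsTopologicalAddGroup E] [ContinuousSMul ℝ E] (x y : E) : IsCompact (segment ℝ x y) := by
  rw [segment_eq_image']
  exact isCompact_Icc.image (by fun_prop)

lemma LinearMap.image_segment_zero {E F : Type*} [AddCommGroup E] [Module ℝ E]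
    [AddCommGroup F] [Module ℝ F] (f : E →ₗ[ℝ] F) (v : E) :
    f '' segment ℝ 0 v = segment ℝ 0 (f v) := by
  simpa using image_segment ℝ f.toAffineMap 0 v

section Zonotope

variable {ι E : Type*} [AddCommGroup E] [Module ℝ E]

lemma image_finsetSum_segment_zero {F : Type*} [AddCommGroup F] [Module ℝ F] (f : E →ₗ[ℝ] F)
    (s : Finset ι) (w : ι → E) :
    f '' ∑ i ∈ s, segment ℝ 0 (w i) = ∑ i ∈ s, segment ℝ 0 (f (w i)) := by
  rw [image_finsetSum f]
  exact Finset.sum_congr rfl fun i _ => f.image_segment_zero (w i)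

lemma isCompact_finsetSum_segment_zero [TopologicalSpace E] [IsTopologicalAddGroup E]
    [ContinuousSMul ℝ E] (s : Finset ι) (w : ι → E) :
    IsCompact (∑ i ∈ s, segment ℝ 0 (w i)) :=
  Finset.sum_induction _ IsCompact (fun _ _ => IsCompact.add) (by simp [← singleton_zero])
    fun i _ => isCompact_segment 0 (w i)

end Zonotope

lemma preimage_prodMk_add_image_prodMk_zero {α β : Type*} [AddMonoid α] [AddMonoid β]
    (K : Set (α × β)) (J : Set β) (x : α) :
    Prod.mk x ⁻¹' (K + Prod.mk 0 '' J) = Prod.mk x ⁻¹' K + J := by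
  ext y
  constructor
  · rintro ⟨⟨a, b⟩, hab, _, ⟨j, hj, rfl⟩, h⟩
    simp only [Prod.mk_add_mk, add_zero, Prod.mk.injEq] at h
    obtain ⟨rfl, rfl⟩ := h
    exact ⟨b, hab, j, hj, rfl⟩
  · rintro ⟨b, hb, j, hj, rfl⟩
    exact ⟨(x, b), hb, (0, j), ⟨j, hj, rfl⟩, by simp⟩

lemma Convex.preimage_prodMk {𝕜 E F : Type*} [Semiring 𝕜] [PartialOrder 𝕜] [AddCommMonoid E]
    [AddCommMonoid F] [Module 𝕜 E] [Module 𝕜 F] {K : Set (E × F)} (hK : Convex 𝕜 K) (x : E) :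
    Convex 𝕜 (Prod.mk x ⁻¹' K) := by
  intro _ h₁ _ h₂ a b ha hb hab
  simpa [← add_smul, hab] using hK h₁ h₂ ha hb hab

lemma IsCompact.preimage_prodMk {X Y : Type*} [TopologicalSpace X] [TopologicalSpace Y]
    [T2Space X] [T2Space Y] {K : Set (X × Y)} (hK : IsCompact K) (x : X) :
    IsCompact (Prod.mk x ⁻¹' K) :=
  (hK.image continuous_snd).of_isClosed_subset (hK.isClosed.preimage (Continuous.prodMk_right x))
    fun _ hy => ⟨_, hy, rfl⟩

lemma segment_zero_prodMk_zero (c : ℝ) :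
    segment ℝ (0 : ℝ × ℝ) (0, c) = Prod.mk 0 '' uIcc 0 c := by
  rw [← segment_eq_uIcc, Prod.image_mk_segment_right, Prod.mk_zero_zero]

lemma Set.finsetSum_Icc {ι α : Type*} [AddCommMonoid α] [LinearOrder α] [IsOrderedAddMonoid α]
    [AddLeftReflectLE α] [ExistsAddOfLE α] (s : Finset ι) {a b : ι → α}
    (hab : ∀ i ∈ s, a i ≤ b i) : ∑ i ∈ s, Icc (a i) (b i) = Icc (∑ i ∈ s, a i) (∑ i ∈ s, b i) := by
  classical
  induction s using Finset.induction_on with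
  | empty => simp [← singleton_zero]
  | insert i s hi ih =>
    rw [Finset.forall_mem_insert] at hab
    simp only [Finset.sum_insert hi]
    rw [ih hab.2, Icc_add_Icc hab.1 (Finset.sum_le_sum hab.2)]

lemma volume_finsetSum_uIcc_zero {ι : Type*} (s : Finset ι) (a : ι → ℝ) :
    volume (∑ i ∈ s, uIcc 0 (a i)) = ENNReal.ofReal (∑ i ∈ s, |a i|) := by
  simp only [uIcc]
  rw [finsetSum_Icc s fun _ _ => min_le_max, Real.volume_Icc, ← Finset.sum_sub_distrib]
  simp_rw [max_sub_min_eq_abs, sub_zero]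

lemma volume_add_uIcc_zero {S : Set ℝ} (hS : IsCompact S) (hconv : Convex ℝ S)
    (hne : S.Nonempty) (c : ℝ) :
    volume (S + uIcc 0 c) = volume S + ENNReal.ofReal |c| := by
  have hS_eq := eq_Icc_of_connected_compact ⟨hne, hconv.isPreconnected⟩ hS
  have hle : sInf S ≤ sSup S := csInf_le_csSup hne hS.bddBelow hS.bddAbove
  rw [hS_eq, uIcc, Icc_add_Icc hle min_le_max, Real.volume_Icc, Real.volume_Icc,
    ← ENNReal.ofReal_add (sub_nonneg.2 hle) (abs_nonneg c)]
  congr 1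
  rcases le_total 0 c with hc | hc <;> simp [hc, abs_of_nonneg, abs_of_nonpos] <;> ring

lemma volume_add_segment_vertical {K : Set (ℝ × ℝ)} (hK : IsCompact K) (hconv : Convex ℝ K)
    (c : ℝ) :
    volume (K + segment ℝ 0 (0, c)) = volume K + ENNReal.ofReal |c| * volume (Prod.fst '' K) := by
  have hK_meas : MeasurableSet K := hK.measurableSet
  have hslice (x : ℝ) : volume (Prod.mk x ⁻¹' (K + segment ℝ 0 (0, c))) =
      volume (Prod.mk x ⁻¹' K) + (Prod.fst '' K).indicator (fun _ => ENNReal.ofReal |c|) x := by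
    rw [segment_zero_prodMk_zero, preimage_prodMk_add_image_prodMk_zero]
    by_cases hx : x ∈ Prod.fst '' K
    · have hne : (Prod.mk x ⁻¹' K).Nonempty := by
        obtain ⟨⟨_, y⟩, hy, rfl⟩ := hx
        exact ⟨y, hy⟩
      rw [indicator_of_mem hx, volume_add_uIcc_zero (hK.preimage_prodMk x)
        (hconv.preimage_prodMk x) hne]
    · have hempty : Prod.mk x ⁻¹' K = ∅ :=
        eq_empty_of_forall_notMem fun y hy => hx ⟨(x, y), hy, rfl⟩
      simp [hempty, indicator_of_notMem hx]
  rw [Measure.volume_eq_prod, Measure.prod_apply (hK.add (isCompact_segment _ _)).measurableSet,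
    Measure.prod_apply hK_meas, lintegral_congr hslice,
    lintegral_add_left (measurable_measure_prodMk_left hK_meas),
    lintegral_indicator (hK.image continuous_fst).measurableSet, setLIntegral_const]

lemma fst_sq_add_snd_sq_pos {u : ℝ × ℝ} (hu : u ≠ 0) : 0 < u.1 ^ 2 + u.2 ^ 2 := by
  rcases ne_or_eq u.1 0 with h₁ | h₁
  · positivity
  · have h₂ : u.2 ≠ 0 := fun h₂ => hu (Prod.ext h₁ h₂)
    positivity

/-- `z ↦ (det(z, u) / ‖u‖², ⟪z, u⟫)`: the rotation taking `u` to the positive `y`-axis, followed by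
the area-preserving rescaling `(x, y) ↦ (x / ‖u‖, ‖u‖ y)`. -/
noncomputable def toVertical (u : ℝ × ℝ) : (ℝ × ℝ) →ₗ[ℝ] ℝ × ℝ :=
  Matrix.toLin (Module.Basis.finTwoProd ℝ) (Module.Basis.finTwoProd ℝ)
    !![u.2 / (u.1 ^ 2 + u.2 ^ 2), -u.1 / (u.1 ^ 2 + u.2 ^ 2); u.1, u.2]

lemma toVertical_apply (u z : ℝ × ℝ) :
    toVertical u z = ((z.1 * u.2 - z.2 * u.1) / (u.1 ^ 2 + u.2 ^ 2), z.1 * u.1 + z.2 * u.2) := by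
  rw [toVertical, Matrix.toLin_finTwoProd_apply]
  ext <;> simp only <;> ring

lemma toVertical_self (u : ℝ × ℝ) : toVertical u u = (0, u.1 ^ 2 + u.2 ^ 2) := by
  rw [toVertical_apply]
  ext <;> simp only <;> ring

lemma det_toVertical {u : ℝ × ℝ} (hu : u ≠ 0) : LinearMap.det (toVertical u) = 1 := by
  have hq := (fst_sq_add_snd_sq_pos hu).ne'
  rw [toVertical, LinearMap.det_toLin, Matrix.det_fin_two_of]
  field_simp
  ring

lemma abs_toVertical_fst_mul {u : ℝ × ℝ} (hu : u ≠ 0) (z : ℝ × ℝ) :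
    |(toVertical u z).1| * (u.1 ^ 2 + u.2 ^ 2) = |z.1 * u.2 - z.2 * u.1| := by
  have hq := fst_sq_add_snd_sq_pos hu
  rw [toVertical_apply, abs_div, abs_of_pos hq, div_mul_cancel₀ _ hq.ne']

lemma volume_finsetSum_segment_add_segment {ι : Type*} (s : Finset ι) (w : ι → ℝ × ℝ)
    (u : ℝ × ℝ) :
    volume (∑ i ∈ s, segment ℝ 0 (w i) + segment ℝ 0 u) =
      volume (∑ i ∈ s, segment ℝ 0 (w i)) +
        ENNReal.ofReal (∑ i ∈ s, |(w i).1 * u.2 - (w i).2 * u.1|) := by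
  rcases eq_or_ne u 0 with rfl | hu
  · simp
  set Z := ∑ i ∈ s, segment ℝ 0 (w i)
  set f := toVertical u
  set q := u.1 ^ 2 + u.2 ^ 2
  have hq : 0 < q := fst_sq_add_snd_sq_pos hu
  have hf_volume (A : Set (ℝ × ℝ)) : volume (f '' A) = volume A := by
    rw [Measure.addHaar_image_linearMap, det_toVertical hu, abs_one, ENNReal.ofReal_one, one_mul]
  have hfZ : f '' Z = ∑ i ∈ s, segment ℝ 0 (f (w i)) := image_finsetSum_segment_zero f s w
  have hfZ_compact : IsCompact (f '' Z) := hfZ ▸ isCompact_finsetSum_segment_zero s _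
  have hfZ_convex : Convex ℝ (f '' Z) :=
    (convex_sum _ fun i _ => convex_segment 0 (w i)).linear_image f
  have hfst : Prod.fst '' (f '' Z) = ∑ i ∈ s, uIcc 0 (f (w i)).1 := by
    rw [hfZ, ← LinearMap.coe_fst (R := ℝ) (M₂ := ℝ), image_finsetSum_segment_zero]
    simp_rw [LinearMap.fst_apply, segment_eq_uIcc]
  have hwidth : ENNReal.ofReal q * ENNReal.ofReal (∑ i ∈ s, |(f (w i)).1|) =
      ENNReal.ofReal (∑ i ∈ s, |(w i).1 * u.2 - (w i).2 * u.1|) := by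
    rw [← ENNReal.ofReal_mul hq.le, Finset.mul_sum]
    exact congrArg ENNReal.ofReal (Finset.sum_congr rfl fun i _ => by
      rw [mul_comm, abs_toVertical_fst_mul hu])
  calc volume (Z + segment ℝ 0 u) = volume (f '' Z + segment ℝ 0 (0, q)) := by
        rw [← hf_volume, image_add f, f.image_segment_zero, toVertical_self]
    _ = volume (f '' Z) + ENNReal.ofReal |q| * volume (Prod.fst '' (f '' Z)) :=
        volume_add_segment_vertical hfZ_compact hfZ_convex q
    _ = _ := by rw [hf_volume, hfst, volume_finsetSum_uIcc_zero, abs_of_pos hq, hwidth]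

lemma Fin.sum_filter_lt_succ {M : Type*} [AddCommMonoid M] (m : ℕ)
    (g : Fin (m + 1) → Fin (m + 1) → M) :
    ∑ p ∈ Finset.univ.filter (fun p : Fin (m + 1) × Fin (m + 1) => p.1 < p.2), g p.1 p.2 =
      ∑ p ∈ Finset.univ.filter (fun p : Fin m × Fin m => p.1 < p.2),
        g p.1.castSucc p.2.castSucc + ∑ i : Fin m, g i.castSucc (Fin.last m) := by
  simp only [Finset.sum_filter, Fintype.sum_prod_type, Fin.sum_univ_castSucc,
    Fin.castSucc_lt_castSucc_iff, Fin.castSucc_lt_last, if_true, Finset.sum_add_distrib]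
  simp [not_lt.2 (Fin.le_last _)]

lemma volume_sum_segment_zero (m : ℕ) (v : Fin m → ℝ × ℝ) :
    volume (∑ i, segment ℝ 0 (v i)) =
      ENNReal.ofReal (∑ p ∈ Finset.univ.filter (fun p : Fin m × Fin m => p.1 < p.2),
        |(v p.1).1 * (v p.2).2 - (v p.1).2 * (v p.2).1|) := by
  induction m with
  | zero => simp [← singleton_zero]
  | succ m ih =>
    rw [Fin.sum_univ_castSucc, volume_finsetSum_segment_add_segment, ih,
      Fin.sum_filter_lt_succ m fun i j => |(v i).1 * (v j).2 - (v i).2 * (v j).1|,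
      ENNReal.ofReal_add (Finset.sum_nonneg fun _ _ => abs_nonneg _)
        (Finset.sum_nonneg fun _ _ => abs_nonneg _)]

/-- The area of the zonotope `Z(E) = [0,e_1] + ⋯ + [0,e_m]` (Minkowski sum of segments)
equals `∑_{i<j} |det(e_i, e_j)|`. -/
theorem stmt_12 (m : ℕ) (e : Fin m → ℤ × ℤ) :
    volume (∑ i : Fin m, seg (((e i).1 : ℝ), ((e i).2 : ℝ))) =
      ENNReal.ofReal
        (((∑ p ∈ Finset.univ.filter (fun p : Fin m × Fin m => p.1 < p.2),
            |(e p.1).1 * (e p.2).2 - (e p.1).2 * (e p.2).1| : ℤ) : ℝ)) := by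
  simp_rw [seg_eq_segment, volume_sum_segment_zero]
  push_cast
  rfl
end
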